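/- The lattice D5 ⊕ A2 ⊕ A2 cannot be embedded in the lattice H ⊕ E8; that is, there is no 10 × 9 integer matrix M such that Mᵀ · G(H ⊕ E8) · M equals the Gram matrix of D5 ⊕ 2A2. -/
import Mathlib

open Matrix

/-- Gram matrix of the ambient lattice (10 × 10). -/
def ambientGram : Matrix (Fin 10) (Fin 10) ℤ :=
  !![0, 1, 0, 0, 0, 0, 0, 0, 0, 0;
      1, 0, 0, 0, 0, 0, 0, 0, 0, 0;
      0, 0, -2, 1, 0, 0, 0, 0, 0, 0;
      0, 0, 1, -2, 1, 0, 0, 0, 0, 0;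
      0, 0, 0, 1, -2, 1, 0, 0, 0, 1;
      0, 0, 0, 0, 1, -2, 1, 0, 0, 0;
      0, 0, 0, 0, 0, 1, -2, 1, 0, 0;
      0, 0, 0, 0, 0, 0, 1, -2, 1, 0;
      0, 0, 0, 0, 0, 0, 0, 1, -2, 0;
      0, 0, 0, 0, 1, 0, 0, 0, 0, -2]

/-- Gram matrix of the root lattice to be embedded (9 × 9). -/
def rootGram : Matrix (Fin 9) (Fin 9) ℤ :=
  !![-2, 1, 0, 0, 0, 0, 0, 0, 0;
      1, -2, 1, 0, 0, 0, 0, 0, 0;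
      0, 1, -2, 1, 1, 0, 0, 0, 0;
      0, 0, 1, -2, 0, 0, 0, 0, 0;
      0, 0, 1, 0, -2, 0, 0, 0, 0;
      0, 0, 0, 0, 0, -2, 1, 0, 0;
      0, 0, 0, 0, 0, 1, -2, 0, 0;
      0, 0, 0, 0, 0, 0, 0, -2, 1;
      0, 0, 0, 0, 0, 0, 0, 1, -2]

/-! Auxiliary matrices for the proof. -/

/-- Change-of-basis matrix: columns are `d1..d5, u1, w1, e = u1-u2, f = w1-w2`. -/
def Qm : Matrix (Fin 9) (Fin 9) ℤ :=
  !![1, 0, 0, 0, 0, 0, 0, 0, 0;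
     0, 1, 0, 0, 0, 0, 0, 0, 0;
     0, 0, 1, 0, 0, 0, 0, 0, 0;
     0, 0, 0, 1, 0, 0, 0, 0, 0;
     0, 0, 0, 0, 1, 0, 0, 0, 0;
     0, 0, 0, 0, 0, 1, 0, 1, 0;
     0, 0, 0, 0, 0, 0, 0, -1, 0;
     0, 0, 0, 0, 0, 0, 1, 0, 1;
     0, 0, 0, 0, 0, 0, 0, 0, -1]

/-- The Gram matrix of the new basis: `Qmᵀ * rootGram * Qm`. -/
def Sm : Matrix (Fin 9) (Fin 9) ℤ :=
  !![-2, 1, 0, 0, 0, 0, 0, 0, 0;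
     1, -2, 1, 0, 0, 0, 0, 0, 0;
     0, 1, -2, 1, 1, 0, 0, 0, 0;
     0, 0, 1, -2, 0, 0, 0, 0, 0;
     0, 0, 1, 0, -2, 0, 0, 0, 0;
     0, 0, 0, 0, 0, -2, 0, -3, 0;
     0, 0, 0, 0, 0, 0, -2, 0, -3;
     0, 0, 0, 0, 0, -3, 0, -6, 0;
     0, 0, 0, 0, 0, 0, -3, 0, -6]

/-- `Sm` reduced mod 3. -/
def S3 : Matrix (Fin 9) (Fin 9) (ZMod 3) :=
  !![1, 1, 0, 0, 0, 0, 0, 0, 0;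
     1, 1, 1, 0, 0, 0, 0, 0, 0;
     0, 1, 1, 1, 1, 0, 0, 0, 0;
     0, 0, 1, 1, 0, 0, 0, 0, 0;
     0, 0, 1, 0, 1, 0, 0, 0, 0;
     0, 0, 0, 0, 0, 1, 0, 0, 0;
     0, 0, 0, 0, 0, 0, 1, 0, 0;
     0, 0, 0, 0, 0, 0, 0, 0, 0;
     0, 0, 0, 0, 0, 0, 0, 0, 0]

/-- Partial inverse of `S3` (inverse of the nondegenerate 7×7 block). -/
def T3 : Matrix (Fin 9) (Fin 9) (ZMod 3) :=
  !![2, 2, 2, 1, 1, 0, 0, 0, 0;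
     2, 1, 1, 2, 2, 0, 0, 0, 0;
     2, 1, 0, 0, 0, 0, 0, 0, 0;
     1, 2, 0, 1, 0, 0, 0, 0, 0;
     1, 2, 0, 0, 1, 0, 0, 0, 0;
     0, 0, 0, 0, 0, 1, 0, 0, 0;
     0, 0, 0, 0, 0, 0, 1, 0, 0;
     0, 0, 0, 0, 0, 0, 0, 0, 0;
     0, 0, 0, 0, 0, 0, 0, 0, 0]

/-- `T3 * S3`: the identity on the first 7 coordinates. -/
def D3 : Matrix (Fin 9) (Fin 9) (ZMod 3) :=
  !![1, 0, 0, 0, 0, 0, 0, 0, 0;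
     0, 1, 0, 0, 0, 0, 0, 0, 0;
     0, 0, 1, 0, 0, 0, 0, 0, 0;
     0, 0, 0, 1, 0, 0, 0, 0, 0;
     0, 0, 0, 0, 1, 0, 0, 0, 0;
     0, 0, 0, 0, 0, 1, 0, 0, 0;
     0, 0, 0, 0, 0, 0, 1, 0, 0;
     0, 0, 0, 0, 0, 0, 0, 0, 0;
     0, 0, 0, 0, 0, 0, 0, 0, 0]

/-- Inverse of `ambientGram` mod 3. -/
def Ginv3 : Matrix (Fin 10) (Fin 10) (ZMod 3) :=
  !![0, 1, 0, 0, 0, 0, 0, 0, 0, 0;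
     1, 0, 0, 0, 0, 0, 0, 0, 0, 0;
     0, 0, 2, 2, 2, 1, 0, 2, 1, 1;
     0, 0, 2, 1, 1, 2, 0, 1, 2, 2;
     0, 0, 2, 1, 0, 0, 0, 0, 0, 0;
     0, 0, 1, 2, 0, 1, 0, 2, 1, 0;
     0, 0, 0, 0, 0, 0, 0, 1, 2, 0;
     0, 0, 2, 1, 0, 2, 1, 0, 0, 0;
     0, 0, 1, 2, 0, 1, 2, 0, 1, 0;
     0, 0, 1, 2, 0, 0, 0, 0, 0, 1]

instance : Fact (Nat.Prime 3) := ⟨by norm_num⟩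

lemma hQS : Qmᵀ * rootGram * Qm = Sm := by decide

lemma hSmS3 : Sm.map (Int.cast : ℤ → ZMod 3) = S3 := by decide

lemma hTS : T3 * S3 = D3 := by decide

set_option maxHeartbeats 2000000 in
lemma hGinv : Ginv3 * (ambientGram.map (Int.cast : ℤ → ZMod 3)) = 1 := by decide

lemma hGsymm : (ambientGram.map (Int.cast : ℤ → ZMod 3))ᵀ
    = ambientGram.map (Int.cast : ℤ → ZMod 3) := by decide

lemma sq_add_sq_eq_zero (a b : ZMod 3) (h : a * a + b * b = 0) : a = 0 ∧ b = 0 := by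
  revert h; revert a b; decide

/-- Sandwich identity for quadratic forms. -/
lemma dot_sandwich {l n : ℕ} (A : Matrix (Fin l) (Fin n) ℤ) (G : Matrix (Fin l) (Fin l) ℤ)
    (y : Fin n → ℤ) :
    (A *ᵥ y) ⬝ᵥ (G *ᵥ (A *ᵥ y)) = y ⬝ᵥ ((Aᵀ * G * A) *ᵥ y) := by
  rw [← Matrix.mulVec_mulVec, ← Matrix.mulVec_mulVec, Matrix.dotProduct_mulVec y,
    Matrix.vecMul_transpose]

/-- Casting `mulVec` commutes with reduction mod 3. -/
lemma mulVec_cast {m n : ℕ} (M : Matrix (Fin m) (Fin n) ℤ) (v : Fin n → ℤ) (k : Fin m) :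
    (((M *ᵥ v) k : ℤ) : ZMod 3)
      = ((M.map (Int.cast : ℤ → ZMod 3)) *ᵥ (fun j => ((v j : ℤ) : ZMod 3))) k := by
  simp only [Matrix.mulVec, dotProduct, Matrix.map, Matrix.of_apply]
  push_cast
  rfl

theorem stmt_5 :
    ¬ ∃ M : Matrix (Fin 10) (Fin 9) ℤ,
      Mᵀ * ambientGram * M = rootGram := by
  rintro ⟨M, hM⟩
  classical
  set G3 : Matrix (Fin 10) (Fin 10) (ZMod 3) :=
    ambientGram.map (Int.cast : ℤ → ZMod 3) with hG3def
  set A : Matrix (Fin 10) (Fin 9) ℤ := M * Qm with hAdef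
  set A3 : Matrix (Fin 10) (Fin 9) (ZMod 3) :=
    A.map (Int.cast : ℤ → ZMod 3) with hA3def
  -- the integral Gram identity for the new basis
  have hGramZ : Aᵀ * ambientGram * A = Sm := by
    rw [hAdef, Matrix.transpose_mul]
    calc Qmᵀ * Mᵀ * ambientGram * (M * Qm)
        = Qmᵀ * (Mᵀ * ambientGram * M) * Qm := by
          simp only [Matrix.mul_assoc]
      _ = Qmᵀ * rootGram * Qm := by rw [hM]
      _ = Sm := hQS
  -- its reduction mod 3
  have hGram3 : A3ᵀ * G3 * A3 = S3 := by
    rw [hA3def, hG3def, ← Matrix.transpose_map (f := (Int.cast : ℤ → ZMod 3))]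
    have e0 : Aᵀ.map (Int.cast : ℤ → ZMod 3) * ambientGram.map (Int.cast : ℤ → ZMod 3)
        * A.map (Int.cast : ℤ → ZMod 3)
        = (Aᵀ * ambientGram * A).map (Int.cast : ℤ → ZMod 3) := by
      simp only [← Int.coe_castRingHom]
      rw [← Matrix.map_mul, ← Matrix.map_mul]
    rw [e0, hGramZ, hSmS3]
  -- key step: the kernel of A3 is trivial
  have hker : ∀ x : Fin 9 → ZMod 3, A3 *ᵥ x = 0 → x = 0 := by
    intro x hx
    have hSx : S3 *ᵥ x = 0 := by
      rw [← hGram3, ← Matrix.mulVec_mulVec, hx, Matrix.mulVec_zero]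
    have hDx : D3 *ᵥ x = 0 := by
      rw [← hTS, ← Matrix.mulVec_mulVec, hSx, Matrix.mulVec_zero]
    have h0 : x 0 = 0 := by
      have h := congrFun hDx 0
      have e : (D3 *ᵥ x) 0 = ![1,0,0,0,0,0,0,0,0] ⬝ᵥ x := rfl
      rw [e] at h
      simpa [dotProduct, Fin.sum_univ_succ] using h
    have h1 : x 1 = 0 := by
      have h := congrFun hDx 1
      have e : (D3 *ᵥ x) 1 = ![0,1,0,0,0,0,0,0,0] ⬝ᵥ x := rfl
      rw [e] at h
      simpa [dotProduct, Fin.sum_univ_succ] using h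
    have h2 : x 2 = 0 := by
      have h := congrFun hDx 2
      have e : (D3 *ᵥ x) 2 = ![0,0,1,0,0,0,0,0,0] ⬝ᵥ x := rfl
      rw [e] at h
      simpa [dotProduct, Fin.sum_univ_succ] using h
    have h3 : x 3 = 0 := by
      have h := congrFun hDx 3
      have e : (D3 *ᵥ x) 3 = ![0,0,0,1,0,0,0,0,0] ⬝ᵥ x := rfl
      rw [e] at h
      simpa [dotProduct, Fin.sum_univ_succ] using h
    have h4 : x 4 = 0 := by
      have h := congrFun hDx 4
      have e : (D3 *ᵥ x) 4 = ![0,0,0,0,1,0,0,0,0] ⬝ᵥ x := rfl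
      rw [e] at h
      simpa [dotProduct, Fin.sum_univ_succ] using h
    have h5 : x 5 = 0 := by
      have h := congrFun hDx 5
      have e : (D3 *ᵥ x) 5 = ![0,0,0,0,0,1,0,0,0] ⬝ᵥ x := rfl
      rw [e] at h
      simpa [dotProduct, Fin.sum_univ_succ] using h
    have h6 : x 6 = 0 := by
      have h := congrFun hDx 6
      have e : (D3 *ᵥ x) 6 = ![0,0,0,0,0,0,1,0,0] ⬝ᵥ x := rfl
      rw [e] at h
      simpa [dotProduct, Fin.sum_univ_succ] using h
    have hxform : x = ![0, 0, 0, 0, 0, 0, 0, x 7, x 8] := by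
      funext j
      fin_cases j
      exacts [h0, h1, h2, h3, h4, h5, h6, rfl, rfl]
    -- lift the last two coordinates to ℤ
    set s : ℤ := ((x 7).val : ℤ) with hs
    set t : ℤ := ((x 8).val : ℤ) with ht
    have hscast : ((s : ℤ) : ZMod 3) = x 7 := by
      rw [hs]; push_cast [ZMod.natCast_val, ZMod.cast_id]; rfl
    have htcast : ((t : ℤ) : ZMod 3) = x 8 := by
      rw [ht]; push_cast [ZMod.natCast_val, ZMod.cast_id]; rfl
    have hycast : (fun j => ((((![0,0,0,0,0,0,0,s,t] : Fin 9 → ℤ)) j : ℤ) : ZMod 3)) = x := by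
      rw [hxform]
      funext j
      fin_cases j
      exacts [Int.cast_zero, Int.cast_zero, Int.cast_zero, Int.cast_zero, Int.cast_zero,
        Int.cast_zero, Int.cast_zero, hscast, htcast]
    set v : Fin 10 → ℤ := A *ᵥ ![0,0,0,0,0,0,0,s,t] with hv
    have hvmod : ∀ k, (3 : ℤ) ∣ v k := by
      intro k
      have hz : ((v k : ℤ) : ZMod 3) = 0 := by
        rw [hv, mulVec_cast, hycast, ← hA3def, hx]
        rfl
      exact (ZMod.intCast_zmod_eq_zero_iff_dvd _ 3).mp hz
    obtain ⟨h, hh⟩ : ∃ h : Fin 10 → ℤ, v = fun k => 3 * h k :=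
      ⟨fun k => v k / 3, funext fun k => (Int.mul_ediv_cancel' (hvmod k)).symm⟩
    -- compute the norm of v two ways
    have hnorm : v ⬝ᵥ (ambientGram *ᵥ v) = -6 * (s * s) + -6 * (t * t) := by
      have e1 : v ⬝ᵥ (ambientGram *ᵥ v)
          = (![0,0,0,0,0,0,0,s,t] : Fin 9 → ℤ) ⬝ᵥ (Sm *ᵥ ![0,0,0,0,0,0,0,s,t]) := by
        rw [hv, ← hGramZ, dot_sandwich]
      rw [e1]
      simp [Sm, Matrix.mulVec, dotProduct, Fin.sum_univ_succ]
      ring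
    have hnine : (9 : ℤ) ∣ v ⬝ᵥ (ambientGram *ᵥ v) := by
      refine ⟨h ⬝ᵥ (ambientGram *ᵥ h), ?_⟩
      have e2 : v = (3 : ℤ) • h := by rw [hh]; funext k; simp [mul_comm]
      rw [e2, Matrix.mulVec_smul, smul_dotProduct, dotProduct_smul,
        smul_eq_mul, smul_eq_mul]
      ring
    obtain ⟨c, hc⟩ := hnine
    rw [hnorm] at hc
    have hdvd : (3 : ℤ) ∣ s * s + t * t := by
      have hss : 0 ≤ s * s := mul_self_nonneg s
      have htt : 0 ≤ t * t := mul_self_nonneg t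
      omega
    have hcast0 : ((s * s + t * t : ℤ) : ZMod 3) = 0 :=
      (ZMod.intCast_zmod_eq_zero_iff_dvd _ 3).mpr hdvd
    push_cast at hcast0
    rw [hscast, htcast] at hcast0
    obtain ⟨h7, h8⟩ := sq_add_sq_eq_zero _ _ hcast0
    rw [hxform, h7, h8]
    funext j
    fin_cases j <;> rfl
  have hinj : Function.Injective A3.mulVecLin := by
    rw [← LinearMap.ker_eq_bot, LinearMap.ker_eq_bot']
    intro x hx
    exact hker x (by simpa using hx)
  -- now the rank argument over the field ZMod 3
  set B3 : Matrix (Fin 10) (Fin 9) (ZMod 3) := G3 * A3 with hB3def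
  have hBinj : Function.Injective B3.mulVecLin := by
    rw [← LinearMap.ker_eq_bot, LinearMap.ker_eq_bot']
    intro x hx
    simp only [Matrix.mulVecLin_apply] at hx
    apply hker
    have e1 : A3 *ᵥ x = (Ginv3 * B3) *ᵥ x := by
      have hGinv' : Ginv3 * G3 = 1 := by rw [hG3def]; exact hGinv
      rw [hB3def, ← Matrix.mul_assoc, hGinv', Matrix.one_mul]
    rw [e1, ← Matrix.mulVec_mulVec, hx, Matrix.mulVec_zero]
  have hrankB : Module.finrank (ZMod 3) (LinearMap.range B3.mulVecLin) = 9 := by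
    rw [LinearMap.finrank_range_of_inj hBinj, Module.finrank_fin_fun]
  have hrankBT : Module.finrank (ZMod 3) (LinearMap.range B3ᵀ.mulVecLin) = 9 := by
    have hh1 : B3ᵀ.rank = B3.rank := Matrix.rank_transpose B3
    have hh2 : B3.rank = 9 := hrankB
    exact hh1.trans hh2
  have hkerdim : Module.finrank (ZMod 3) (LinearMap.ker B3ᵀ.mulVecLin) = 1 := by
    have hsum := LinearMap.finrank_range_add_finrank_ker B3ᵀ.mulVecLin
    rw [Module.finrank_fin_fun, hrankBT] at hsum
    omega
  set e3 : Fin 10 → ZMod 3 := A3 *ᵥ ![0,0,0,0,0,0,0,1,0] with he3def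
  set f3 : Fin 10 → ZMod 3 := A3 *ᵥ ![0,0,0,0,0,0,0,0,1] with hf3def
  have hBT : B3ᵀ = A3ᵀ * G3 := by
    rw [hB3def, Matrix.transpose_mul, hG3def, hGsymm]
  have hS3e : S3 *ᵥ ![0,0,0,0,0,0,0,1,0] = (0 : Fin 9 → ZMod 3) := by decide
  have hS3f : S3 *ᵥ ![0,0,0,0,0,0,0,0,1] = (0 : Fin 9 → ZMod 3) := by decide
  have he3ker : B3ᵀ *ᵥ e3 = 0 := by
    rw [he3def, hBT, Matrix.mulVec_mulVec, hGram3, hS3e]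
  have hf3ker : B3ᵀ *ᵥ f3 = 0 := by
    rw [hf3def, hBT, Matrix.mulVec_mulVec, hGram3, hS3f]
  have hind : LinearIndependent (ZMod 3) ![e3, f3] := by
    rw [LinearIndependent.pair_iff]
    intro a b hab
    have hz0 : A3 *ᵥ (a • (![0,0,0,0,0,0,0,1,0] : Fin 9 → ZMod 3)
        + b • (![0,0,0,0,0,0,0,0,1] : Fin 9 → ZMod 3)) = 0 := by
      rw [Matrix.mulVec_add, Matrix.mulVec_smul, Matrix.mulVec_smul, ← he3def, ← hf3def]
      exact hab
    have hz := hker _ hz0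
    have ea : a = 0 := by
      have h7 := congrFun hz 7
      have e : (a • (![0,0,0,0,0,0,0,1,0] : Fin 9 → ZMod 3)
          + b • (![0,0,0,0,0,0,0,0,1] : Fin 9 → ZMod 3)) 7 = a * 1 + b * 0 := rfl
      rw [e] at h7
      simpa using h7
    have eb : b = 0 := by
      have h8 := congrFun hz 8
      have e : (a • (![0,0,0,0,0,0,0,1,0] : Fin 9 → ZMod 3)
          + b • (![0,0,0,0,0,0,0,0,1] : Fin 9 → ZMod 3)) 8 = a * 0 + b * 1 := rfl
      rw [e] at h8
      simpa using h8
    exact ⟨ea, eb⟩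
  clear_value B3 e3 f3
  have hspan : Submodule.span (ZMod 3) (Set.range ![e3, f3])
      ≤ LinearMap.ker B3ᵀ.mulVecLin := by
    rw [Submodule.span_le]
    rintro z ⟨i, rfl⟩
    fin_cases i
    · simpa [LinearMap.mem_ker, Matrix.mulVecLin_apply, Matrix.mulVec_transpose] using he3ker
    · simpa [LinearMap.mem_ker, Matrix.mulVecLin_apply, Matrix.mulVec_transpose] using hf3ker
  have h2le : (2 : ℕ) ≤ Module.finrank (ZMod 3) (LinearMap.ker B3ᵀ.mulVecLin) := by
    have hcard := finrank_span_eq_card hind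
    simp only [Fintype.card_fin] at hcard
    calc (2 : ℕ)
        = Module.finrank (ZMod 3)
            (Submodule.span (ZMod 3) (Set.range ![e3, f3])) := hcard.symm
      _ ≤ _ := Submodule.finrank_mono hspan
  omega
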